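/- arXiv:math/0605521 — 4 statements merged into one kernel-verified Lean document; each statement's English description precedes it below -/
import Mathlib

section
/- The set of coincidence rotations of a lattice Γ in ℝⁿ (i.e., rotations R ∈ SO(n) such that Γ ∩ RΓ has finite index in Γ) forms a group under matrix multiplication. -/
open Matrix

noncomputable section

/-- CSL: intersection of lattice with rotated copy. -/
def csl {n : ℕ} (Γ : AddSubgroup (Fin n → ℝ)) (R : Matrix (Fin n) (Fin n) ℝ) :
    AddSubgroup (Fin n → ℝ) :=
  Γ ⊓ Γ.map R.mulVecLin.toAddMonoidHom

def IsSO {n : ℕ} (R : Matrix (Fin n) (Fin n) ℝ) : Prop :=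
  Rᵀ * R = 1 ∧ R.det = 1

def IsCoincRot {n : ℕ} (Γ : AddSubgroup (Fin n → ℝ)) (R : Matrix (Fin n) (Fin n) ℝ) : Prop :=
  IsSO R ∧ (csl Γ R).relIndex Γ ≠ 0

def bcc : AddSubgroup (Fin 3 → ℝ) :=
  AddSubgroup.closure {![1,0,0], ![0,1,0], ![1/2,1/2,1/2]}

def qnorm (a b c d : ℤ) : ℤ := a^2 + b^2 + c^2 + d^2

def Rquat (a b c d : ℤ) : Matrix (Fin 3) (Fin 3) ℝ :=
  ((qnorm a b c d : ℝ))⁻¹ •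
    !![(a^2+b^2-c^2-d^2 : ℝ), -2*a*d+2*b*c, 2*a*c+2*b*d;
       2*a*d+2*b*c, a^2-b^2+c^2-d^2, -2*a*b+2*c*d;
       -2*a*c+2*b*d, 2*a*b+2*c*d, a^2-b^2-c^2+d^2]

def Primitive (a b c d : ℤ) : Prop := Int.gcd a (Int.gcd b (Int.gcd c d)) = 1

def IsIntQ (x : ℝ) : Prop := ∃ n : ℤ, x = n

def HurwitzSet : Set (Quaternion ℝ) :=
  {q | (IsIntQ q.re ∧ IsIntQ q.imI ∧ IsIntQ q.imJ ∧ IsIntQ q.imK) ∨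
       (IsIntQ (q.re - 1/2) ∧ IsIntQ (q.imI - 1/2) ∧ IsIntQ (q.imJ - 1/2) ∧
        IsIntQ (q.imK - 1/2))}

def Pproj (q : Quaternion ℝ) : Fin 3 → ℝ := ![q.imI, q.imJ, q.imK]

def quat (a b c d : ℤ) : Quaternion ℝ := ⟨(a : ℝ), b, c, d⟩

def mcsl {n : ℕ} (Γ : AddSubgroup (Fin n → ℝ)) {m : ℕ}
    (R : Fin m → Matrix (Fin n) (Fin n) ℝ) : AddSubgroup (Fin n → ℝ) :=
  Γ ⊓ ⨅ i, Γ.map (R i).mulVecLin.toAddMonoidHom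

noncomputable section AuxStuff

namespace CoincAux

variable {n : ℕ}

/-- integer coordinates of a lattice point -/
lemma exists_int_coords (b : Module.Basis (Fin n) ℝ (Fin n → ℝ)) {x : Fin n → ℝ}
    (hx : x ∈ Submodule.span ℤ (Set.range (⇑b))) :
    ∃ v : Fin n → ℤ, ∀ i, b.repr x i = (v i : ℝ) := by
  refine ⟨fun i => (b.restrictScalars ℤ).repr ⟨x, hx⟩ i, fun i => ?_⟩
  have h := Module.Basis.restrictScalars_repr_apply ℤ b ⟨x, hx⟩ i
  rw [algebraMap_int_eq] at h
  exact h.symm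

lemma sum_int_smul_mem (b : Module.Basis (Fin n) ℝ (Fin n → ℝ)) (v : Fin n → ℤ) :
    (∑ i, (v i : ℝ) • b i) ∈ Submodule.span ℤ (Set.range (⇑b)) := by
  refine Submodule.sum_mem _ fun i _ => ?_
  rw [show ((v i : ℤ) : ℝ) • b i = v i • b i from Int.cast_smul_eq_zsmul ℝ (v i) (b i)]
  exact Submodule.smul_mem _ (v i) (Submodule.subset_span (Set.mem_range_self i))

/-- Key finiteness lemma: if k•Γ ⊆ K then K has finite relative index over Γ. -/
lemma relindex_ne_zero_of_smul_mem (b : Module.Basis (Fin n) ℝ (Fin n → ℝ))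
    (K : AddSubgroup (Fin n → ℝ)) (k : ℕ) (hk : k ≠ 0)
    (h : ∀ x ∈ Submodule.span ℤ (Set.range (⇑b)), (k : ℝ) • x ∈ K) :
    K.relIndex (Submodule.span ℤ (Set.range (⇑b))).toAddSubgroup ≠ 0 := by
  haveI : NeZero k := ⟨hk⟩
  set Γ : AddSubgroup (Fin n → ℝ) := (Submodule.span ℤ (Set.range (⇑b))).toAddSubgroup with hΓ
  have hmem : ∀ x : Γ, (x : Fin n → ℝ) ∈ Submodule.span ℤ (Set.range (⇑b)) := fun x => x.2
  let c := b.restrictScalars ℤ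
  let f : Γ →+ (Fin n → ZMod k) :=
    { toFun := fun x i => ((c.repr ⟨(x : Fin n → ℝ), hmem x⟩ i : ℤ) : ZMod k)
      map_zero' := by
        funext i
        have h0 : (⟨((0 : Γ) : Fin n → ℝ), hmem 0⟩ :
            Submodule.span ℤ (Set.range (⇑b))) = 0 := Subtype.ext rfl
        show ((c.repr ⟨((0 : Γ) : Fin n → ℝ), hmem 0⟩ i : ℤ) : ZMod k) = 0
        rw [h0]
        simp
      map_add' := by
        intro x y
        funext i
        have hxy : (⟨((x + y : Γ) : Fin n → ℝ), hmem (x + y)⟩ :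
              Submodule.span ℤ (Set.range (⇑b)))
            = ⟨(x : Fin n → ℝ), hmem x⟩ + ⟨(y : Fin n → ℝ), hmem y⟩ := Subtype.ext rfl
        show ((c.repr ⟨((x + y : Γ) : Fin n → ℝ), hmem (x + y)⟩ i : ℤ) : ZMod k)
            = ((c.repr ⟨(x : Fin n → ℝ), hmem x⟩ i : ℤ) : ZMod k)
              + ((c.repr ⟨(y : Fin n → ℝ), hmem y⟩ i : ℤ) : ZMod k)
        rw [hxy, map_add, Finsupp.add_apply]
        push_cast
        ring }
  have hker : f.ker ≤ K.addSubgroupOf Γ := by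
    intro x hx
    rw [AddSubgroup.mem_addSubgroupOf]
    have hx' : ∀ i, ((c.repr ⟨(x : Fin n → ℝ), hmem x⟩ i : ℤ) : ZMod k) = 0 := by
      intro i
      exact congrFun (AddMonoidHom.mem_ker.mp hx) i
    have hdvd : ∀ i, (k : ℤ) ∣ c.repr ⟨(x : Fin n → ℝ), hmem x⟩ i := fun i =>
      (ZMod.intCast_zmod_eq_zero_iff_dvd _ _).mp (hx' i)
    set y : Fin n → ℝ := ∑ i, ((c.repr ⟨(x : Fin n → ℝ), hmem x⟩ i / (k : ℤ) : ℤ) : ℝ) • b i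
      with hy
    have hyM : y ∈ Submodule.span ℤ (Set.range (⇑b)) := sum_int_smul_mem b _
    have hky : (k : ℝ) • y = (x : Fin n → ℝ) := by
      rw [hy, Finset.smul_sum]
      have heq : ∀ i, (k : ℝ) • (((c.repr ⟨(x : Fin n → ℝ), hmem x⟩ i / (k : ℤ) : ℤ) : ℝ) • b i)
          = (b.repr (x : Fin n → ℝ) i) • b i := by
        intro i
        rw [smul_smul]
        congr 1
        have hbr := Module.Basis.restrictScalars_repr_apply ℤ b ⟨(x : Fin n → ℝ), hmem x⟩ i
        rw [algebraMap_int_eq] at hbr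
        rw [show (b.repr (x : Fin n → ℝ)) i
            = ((c.repr ⟨(x : Fin n → ℝ), hmem x⟩ i : ℤ) : ℝ) from hbr.symm,
          ← Int.cast_natCast (R := ℝ), ← Int.cast_mul, Int.mul_ediv_cancel' (hdvd i)]
      rw [Finset.sum_congr rfl fun i _ => heq i]
      exact b.sum_repr _
    have hK := h y hyM
    rwa [hky] at hK
  have hdvd : (K.addSubgroupOf Γ).index ∣ f.ker.index :=
    AddSubgroup.index_dvd_of_le hker
  have hkerind : f.ker.index ≠ 0 := by
    rw [AddSubgroup.index_ker]
    exact Nat.card_ne_zero.mpr ⟨⟨0, AddSubgroup.zero_mem _⟩, Set.toFinite _⟩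
  exact fun h0 => hkerind (Nat.eq_zero_of_zero_dvd (h0 ▸ hdvd))

lemma exists_uniform_smul {G : Type*} [AddCommGroup G] (K Γ : AddSubgroup G)
    (h : K.relIndex Γ ≠ 0) :
    ∃ m : ℕ, m ≠ 0 ∧ ∀ x ∈ Γ, m • x ∈ K := by
  refine ⟨(K.relIndex Γ).factorial, Nat.factorial_ne_zero _, fun x hx => ?_⟩
  have hm := AddSubgroup.nsmul_mem_of_relIndex_ne_zero_of_dvd h hx
    (fun m' h1 h2 => Nat.dvd_factorial h1 h2)
  exact hm.1

end CoincAux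

theorem stmt0 (n : ℕ) (b : Module.Basis (Fin n) ℝ (Fin n → ℝ))
    (Γ : AddSubgroup (Fin n → ℝ))
    (hΓ : Γ = (Submodule.span ℤ (Set.range fun i => b i)).toAddSubgroup) :
    IsCoincRot Γ 1 ∧
    (∀ R S : Matrix (Fin n) (Fin n) ℝ,
      IsCoincRot Γ R → IsCoincRot Γ S → IsCoincRot Γ (R * S)) ∧
    (∀ R : Matrix (Fin n) (Fin n) ℝ, IsCoincRot Γ R → IsCoincRot Γ R⁻¹) := by
  subst hΓ
  set Γ : AddSubgroup (Fin n → ℝ) :=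
    (Submodule.span ℤ (Set.range fun i => b i)).toAddSubgroup with hΓ
  have hΓmem : ∀ x, x ∈ Γ ↔ x ∈ Submodule.span ℤ (Set.range (⇑b)) := fun x => Iff.rfl
  have hrel : ∀ (K : AddSubgroup (Fin n → ℝ)) (k : ℕ), k ≠ 0 →
      (∀ x ∈ Γ, (k : ℝ) • x ∈ K) → K.relIndex Γ ≠ 0 := by
    intro K k hk h
    exact CoincAux.relindex_ne_zero_of_smul_mem b K k hk fun x hx => h x ((hΓmem x).mpr hx)
  refine ⟨⟨⟨by simp, by simp⟩, ?_⟩, ?_, ?_⟩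
  · -- identity
    have h1 : csl Γ 1 = Γ := by
      rw [csl, Matrix.mulVecLin_one]
      have h2 : Γ.map (LinearMap.id : (Fin n → ℝ) →ₗ[ℝ] (Fin n → ℝ)).toAddMonoidHom = Γ := by
        ext x
        simp [AddSubgroup.mem_map]
      rw [h2, inf_idem]
    rw [h1, AddSubgroup.relIndex_self]
    exact one_ne_zero
  · -- product
    rintro R S ⟨⟨hR1, hR2⟩, hRi⟩ ⟨⟨hS1, hS2⟩, hSi⟩
    refine ⟨⟨?_, ?_⟩, ?_⟩
    · rw [Matrix.transpose_mul, Matrix.mul_assoc, ← Matrix.mul_assoc Rᵀ, hR1,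
        Matrix.one_mul, hS1]
    · rw [Matrix.det_mul, hR2, hS2, mul_one]
    · obtain ⟨m, hm0, hmR⟩ := CoincAux.exists_uniform_smul (csl Γ R) Γ hRi
      obtain ⟨k, hk0, hkS⟩ := CoincAux.exists_uniform_smul (csl Γ S) Γ hSi
      refine hrel _ (m * k) (mul_ne_zero hm0 hk0) ?_
      intro x hxΓ
      constructor
      · rw [show ((m * k : ℕ) : ℝ) • x = (m * k) • x from Nat.cast_smul_eq_nsmul ℝ _ x]
        exact AddSubgroup.nsmul_mem Γ hxΓ _
      · obtain ⟨hmΓ, y, hyΓ, hy⟩ := hmR x hxΓ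
        obtain ⟨hkΓ, z, hzΓ, hz⟩ := (hkS y hyΓ : k • y ∈ csl Γ S)
        have hy' : R.mulVecLin y = (m : ℝ) • x := by
          rw [show (R.mulVecLin y : Fin n → ℝ) = R.mulVecLin.toAddMonoidHom y from rfl, hy,
            ← Nat.cast_smul_eq_nsmul ℝ m x]
        have hz' : S.mulVecLin z = (k : ℝ) • y := by
          rw [show (S.mulVecLin z : Fin n → ℝ) = S.mulVecLin.toAddMonoidHom z from rfl, hz,
            ← Nat.cast_smul_eq_nsmul ℝ k y]
        refine ⟨z, hzΓ, ?_⟩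
        show (R * S).mulVecLin z = ((m * k : ℕ) : ℝ) • x
        calc (R * S).mulVecLin z
            = R.mulVecLin (S.mulVecLin z) := by rw [Matrix.mulVecLin_mul]; rfl
          _ = R.mulVecLin ((k : ℝ) • y) := by rw [hz']
          _ = (k : ℝ) • R.mulVecLin y := R.mulVecLin.map_smul _ _
          _ = (k : ℝ) • ((m : ℝ) • x) := by rw [hy']
          _ = ((m * k : ℕ) : ℝ) • x := by
              rw [smul_smul]
              congr 1
              push_cast
              ring
  · -- inverse
    rintro R ⟨⟨hR1, hR2⟩, hRi⟩
    have hRinv : R⁻¹ = Rᵀ := Matrix.inv_eq_left_inv hR1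
    have hRR : R * Rᵀ = 1 := mul_eq_one_comm.mp hR1
    refine ⟨⟨?_, ?_⟩, ?_⟩
    · rw [hRinv, Matrix.transpose_transpose, hRR]
    · rw [hRinv, Matrix.det_transpose, hR2]
    · rw [hRinv]
      obtain ⟨m, hm0, hmR⟩ := CoincAux.exists_uniform_smul (csl Γ R) Γ hRi
      -- the linear map T = m • Rᵀ preserves Γ
      set T : (Fin n → ℝ) →ₗ[ℝ] (Fin n → ℝ) := ((m : ℝ) • Rᵀ).mulVecLin with hT
      have hTΓ : ∀ x ∈ Γ, T x ∈ Γ := by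
        intro x hx
        obtain ⟨-, y, hyΓ, hy⟩ := hmR x hx
        have hy' : R.mulVecLin y = (m : ℝ) • x := by
          rw [show (R.mulVecLin y : Fin n → ℝ) = R.mulVecLin.toAddMonoidHom y from rfl, hy,
            ← Nat.cast_smul_eq_nsmul ℝ m x]
        have h1 : T x = Rᵀ *ᵥ ((m : ℝ) • x) := by
          rw [hT, Matrix.mulVecLin_apply, Matrix.smul_mulVec, Matrix.mulVec_smul]
        rw [h1, ← hy', Matrix.mulVecLin_apply, Matrix.mulVec_mulVec, hR1, Matrix.one_mulVec]
        exact hyΓ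
      have hbΓ : ∀ j, (b j : Fin n → ℝ) ∈ Γ := fun j =>
        (hΓmem _).mpr (Submodule.subset_span (Set.mem_range_self j))
      -- integer coordinates of T (b j)
      have hTb : ∀ j, ∃ v : Fin n → ℤ, ∀ i, b.repr (T (b j)) i = (v i : ℝ) := fun j =>
        CoincAux.exists_int_coords b ((hΓmem _).mp (hTΓ _ (hbΓ j)))
      choose Cv hCv using hTb
      set C : Matrix (Fin n) (Fin n) ℤ := fun i j => Cv j i with hC
      have hTbsum : ∀ j, T (b j) = ∑ i, ((C i j : ℤ) : ℝ) • b i := by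
        intro j
        conv_lhs => rw [← b.sum_repr (T (b j))]
        exact Finset.sum_congr rfl fun i _ => by rw [hCv j i]
      -- determinant of C
      have hdetC : C.det = (m : ℤ) ^ n := by
        have hmap : C.map (Int.cast : ℤ → ℝ) = LinearMap.toMatrix b b T := by
          ext i j
          rw [LinearMap.toMatrix_apply, Matrix.map_apply, hCv j i]
        have h1 := RingHom.map_det (Int.castRingHom ℝ) C
        rw [RingHom.mapMatrix_apply] at h1
        have h2 : (LinearMap.toMatrix b b T).det = LinearMap.det T :=
          LinearMap.det_toMatrix b T
        have h3 : LinearMap.det T = ((m : ℝ) • Rᵀ).det := by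
          rw [hT, ← Matrix.toLin'_apply' ((m : ℝ) • Rᵀ)]
          exact LinearMap.det_toLin' _
        have h4 : ((m : ℝ) • Rᵀ).det = (m : ℝ) ^ n := by
          rw [Matrix.det_smul, Matrix.det_transpose, hR2, mul_one, Fintype.card_fin]
        have h5 : ((C.det : ℤ) : ℝ) = (((m : ℤ) ^ n : ℤ) : ℝ) := by
          rw [show ((C.det : ℤ) : ℝ) = (Int.castRingHom ℝ) C.det from rfl, h1,
            show (C.map (Int.castRingHom ℝ)).det = (C.map (Int.cast : ℤ → ℝ)).det from rfl,
            hmap, h2, h3, h4]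
          push_cast
          ring
        exact_mod_cast h5
      -- now show (m^n) • Γ ⊆ csl Γ Rᵀ
      refine hrel _ (m ^ n) (pow_ne_zero n hm0) ?_
      intro x hxΓ
      have hx : x ∈ Submodule.span ℤ (Set.range (⇑b)) := (hΓmem x).mp hxΓ
      constructor
      · rw [show ((m ^ n : ℕ) : ℝ) • x = (m ^ n) • x from Nat.cast_smul_eq_nsmul ℝ _ x]
        exact AddSubgroup.nsmul_mem Γ hxΓ _
      · obtain ⟨v, hv⟩ := CoincAux.exists_int_coords b hx
        set w : Fin n → ℤ := C.adjugate *ᵥ v with hw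
        set y : Fin n → ℝ := ∑ j, ((w j : ℤ) : ℝ) • b j with hy
        have hyΓ : y ∈ Γ := (hΓmem _).mpr (CoincAux.sum_int_smul_mem b w)
        have hTy : T y = ((m ^ n : ℕ) : ℝ) • x := by
          have hCw : C *ᵥ w = fun i => (m : ℤ) ^ n * v i := by
            rw [hw, Matrix.mulVec_mulVec, Matrix.mul_adjugate, hdetC]
            funext i
            rw [Matrix.smul_mulVec, Matrix.one_mulVec]
            rfl
          calc T y = ∑ j, ((w j : ℤ) : ℝ) • T (b j) := by
                rw [hy, map_sum]
                exact Finset.sum_congr rfl fun j _ => T.map_smul _ _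
            _ = ∑ j, ∑ i, (((C i j * w j : ℤ) : ℤ) : ℝ) • b i := by
                refine Finset.sum_congr rfl fun j _ => ?_
                rw [hTbsum j, Finset.smul_sum]
                refine Finset.sum_congr rfl fun i _ => ?_
                rw [smul_smul, ← Int.cast_mul, mul_comm (w j) (C i j)]
            _ = ∑ i, (((C *ᵥ w) i : ℤ) : ℝ) • b i := by
                rw [Finset.sum_comm]
                refine Finset.sum_congr rfl fun i _ => ?_
                rw [← Finset.sum_smul]
                congr 1
                rw [Matrix.mulVec, dotProduct]
                push_cast
                ring
            _ = ((m ^ n : ℕ) : ℝ) • x := by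
                rw [hCw]
                conv_rhs => rw [← b.sum_repr x]
                rw [Finset.smul_sum]
                refine Finset.sum_congr rfl fun i _ => ?_
                rw [hv i, smul_smul]
                congr 1
                push_cast
                ring
        refine ⟨(m : ℝ) • y, ?_, ?_⟩
        · rw [show ((m : ℕ) : ℝ) • y = m • y from Nat.cast_smul_eq_nsmul ℝ _ y]
          exact AddSubgroup.nsmul_mem Γ hyΓ _
        · show Rᵀ.mulVecLin ((m : ℝ) • y) = ((m ^ n : ℕ) : ℝ) • x
          rw [← hTy, hT, Matrix.mulVecLin_apply, Matrix.mulVecLin_apply,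
            Matrix.smul_mulVec, Matrix.mulVec_smul]
end AuxStuff
end
end

section
/- A rotation R ∈ SO(3) is a coincidence rotation of the body-centered cubic lattice if and only if all entries of the matrix R are rational numbers. -/
open Matrix

noncomputable section

def rat3 : AddSubgroup (Fin 3 → ℝ) where
  carrier := {v | ∀ j, ∃ q : ℚ, v j = q}
  zero_mem' := fun j => ⟨0, by simp⟩
  add_mem' := by
    rintro a b ha hb j
    obtain ⟨p, hp⟩ := ha j; obtain ⟨q, hq⟩ := hb j
    exact ⟨p + q, by simp [hp, hq]⟩
  neg_mem' := by
    rintro a ha j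
    obtain ⟨p, hp⟩ := ha j
    exact ⟨-p, by simp [hp]⟩

def halfint3 : AddSubgroup (Fin 3 → ℝ) where
  carrier := {v | ∀ j, ∃ n : ℤ, 2 * v j = n}
  zero_mem' := fun j => ⟨0, by simp⟩
  add_mem' := by
    rintro a b ha hb j
    obtain ⟨p, hp⟩ := ha j; obtain ⟨q, hq⟩ := hb j
    exact ⟨p + q, by push_cast; rw [← hp, ← hq]; simp only [Pi.add_apply]; ring⟩
  neg_mem' := by
    rintro a ha j
    obtain ⟨p, hp⟩ := ha j
    exact ⟨-p, by push_cast; rw [← hp]; simp only [Pi.neg_apply]; ring⟩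

lemma bcc_le_rat3 : bcc ≤ rat3 := by
  rw [bcc, AddSubgroup.closure_le]
  rintro v (rfl | rfl | rfl) j <;> fin_cases j
  · exact ⟨1, by norm_num⟩
  · exact ⟨0, by norm_num⟩
  · exact ⟨0, by norm_num⟩
  · exact ⟨0, by norm_num⟩
  · exact ⟨1, by norm_num⟩
  · exact ⟨0, by norm_num⟩
  · exact ⟨1/2, by norm_num⟩
  · exact ⟨1/2, by norm_num⟩
  · exact ⟨1/2, by norm_num⟩

lemma bcc_le_halfint3 : bcc ≤ halfint3 := by
  rw [bcc, AddSubgroup.closure_le]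
  rintro v (rfl | rfl | rfl) j <;> fin_cases j
  · exact ⟨2, by norm_num⟩
  · exact ⟨0, by norm_num⟩
  · exact ⟨0, by norm_num⟩
  · exact ⟨0, by norm_num⟩
  · exact ⟨2, by norm_num⟩
  · exact ⟨0, by norm_num⟩
  · exact ⟨1, by norm_num⟩
  · exact ⟨1, by norm_num⟩
  · exact ⟨1, by norm_num⟩

lemma int_mem_bcc (n : Fin 3 → ℤ) : (fun j => (n j : ℝ)) ∈ bcc := by
  have h0 : ![(1:ℝ),0,0] ∈ bcc := AddSubgroup.subset_closure (by simp)
  have h1 : ![(0:ℝ),1,0] ∈ bcc := AddSubgroup.subset_closure (by simp)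
  have hh : ![(1:ℝ)/2,1/2,1/2] ∈ bcc := AddSubgroup.subset_closure (by simp)
  have h2 : ![(0:ℝ),0,1] ∈ bcc := by
    have : ![(0:ℝ),0,1] = (2:ℤ) • ![(1:ℝ)/2,1/2,1/2] - ![(1:ℝ),0,0] - ![(0:ℝ),1,0] := by
      funext j; fin_cases j <;> norm_num
    rw [this]
    exact AddSubgroup.sub_mem _ (AddSubgroup.sub_mem _ (AddSubgroup.zsmul_mem _ hh 2) h0) h1
  have : (fun j => (n j : ℝ)) =
      n 0 • ![(1:ℝ),0,0] + n 1 • ![(0:ℝ),1,0] + n 2 • ![(0:ℝ),0,1] := by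
    funext j; fin_cases j <;> simp
  rw [this]
  exact AddSubgroup.add_mem _ (AddSubgroup.add_mem _ (AddSubgroup.zsmul_mem _ h0 _)
    (AddSubgroup.zsmul_mem _ h1 _)) (AddSubgroup.zsmul_mem _ h2 _)

lemma den_dvd_int (q : ℚ) (D : ℕ) (h : q.den ∣ D) : ∃ m : ℤ, (D : ℚ) * q = m := by
  obtain ⟨k, hk⟩ := h
  refine ⟨q.num * k, ?_⟩
  rw [hk]
  push_cast
  rw [← Rat.mul_den_eq_num]
  ring

lemma exists_nat_smul_mem (R : Matrix (Fin 3) (Fin 3) ℝ) (hR : IsSO R)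
    (hrat : ∀ i j, ∃ q : ℚ, R i j = (q : ℝ)) :
    ∃ N : ℕ, 0 < N ∧ ∀ γ ∈ bcc, ∃ w ∈ bcc, R.mulVecLin w = (N : ℝ) • γ := by
  have hRRt : R * Rᵀ = 1 := mul_eq_one_comm.mp hR.1
  choose q hq using hrat
  set D : ℕ := ∏ i : Fin 3, ∏ j : Fin 3, (q i j).den with hD
  have hDpos : 0 < D := Finset.prod_pos fun i _ => Finset.prod_pos fun j _ => (q i j).pos
  have hdvd : ∀ i j, (q i j).den ∣ D := by
    intro i j
    calc (q i j).den ∣ ∏ j' : Fin 3, (q i j').den := Finset.dvd_prod_of_mem _ (Finset.mem_univ j)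
    _ ∣ D := Finset.dvd_prod_of_mem _ (Finset.mem_univ i)
  choose m hm using fun i j => den_dvd_int (q i j) D (hdvd i j)
  refine ⟨2 * D, by positivity, ?_⟩
  intro γ hγ
  choose n hn using bcc_le_halfint3 hγ
  refine ⟨((2 * D : ℕ) : ℝ) • (Rᵀ *ᵥ γ), ?_, ?_⟩
  · have : ((2 * D : ℕ) : ℝ) • (Rᵀ *ᵥ γ) = fun j => ((∑ k, m k j * n k : ℤ) : ℝ) := by
      funext j
      have : (Rᵀ *ᵥ γ) j = ∑ k, R k j * γ k := by
        rw [Matrix.mulVec]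
        simp [dotProduct, Matrix.transpose_apply]
      simp only [Pi.smul_apply, this, smul_eq_mul, Int.cast_sum, Int.cast_mul,
        Finset.mul_sum]
      refine Finset.sum_congr rfl fun k _ => ?_
      have h1 : ((m k j : ℝ)) = (D : ℝ) * (q k j : ℝ) := by
        exact_mod_cast congrArg (fun x : ℚ => (x : ℝ)) (hm k j).symm
      rw [h1, ← hq k j, ← hn k]
      push_cast
      ring
    rw [this]
    exact int_mem_bcc _
  · rw [Matrix.mulVecLin_apply, Matrix.mulVec_smul, Matrix.mulVec_mulVec, hRRt,
      Matrix.one_mulVec]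

lemma relindex_ne_zero (R : Matrix (Fin 3) (Fin 3) ℝ) (hR : IsSO R)
    (hrat : ∀ i j, ∃ q : ℚ, R i j = (q : ℝ)) :
    (csl bcc R).relIndex bcc ≠ 0 := by
  obtain ⟨N, hN, hkey⟩ := exists_nat_smul_mem R hR hrat
  set M : ℕ := 2 * N with hM
  haveI : NeZero M := ⟨by omega⟩
  let f : bcc →+ (Fin 3 → ZMod M) :=
  { toFun := fun γ j => ((⌊2 * (γ : Fin 3 → ℝ) j⌋ : ℤ) : ZMod M)
    map_zero' := by funext j; simp
    map_add' := by
      rintro ⟨a, ha⟩ ⟨b, hb⟩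
      funext j
      obtain ⟨na, hna⟩ := bcc_le_halfint3 ha j
      obtain ⟨nb, hnb⟩ := bcc_le_halfint3 hb j
      show ((⌊2 * (a + b) j⌋ : ℤ) : ZMod M) = ((⌊2 * a j⌋ : ℤ) : ZMod M) + ((⌊2 * b j⌋ : ℤ) : ZMod M)
      have : 2 * (a + b) j = ((na + nb : ℤ) : ℝ) := by
        simp only [Pi.add_apply]; push_cast; rw [← hna, ← hnb]; ring
      rw [this, hna, hnb, Int.floor_intCast, Int.floor_intCast, Int.floor_intCast]
      push_cast
      ring }
  have hker : f.ker ≤ (csl bcc R).addSubgroupOf bcc := by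
    rintro ⟨γ, hγ⟩ hf
    choose n hn using fun j => bcc_le_halfint3 hγ j
    have hdvd : ∀ j, (M : ℤ) ∣ n j := by
      intro j
      have h0 : ((⌊2 * γ j⌋ : ℤ) : ZMod M) = 0 := congrFun (hf : _) j
      rw [hn j, Int.floor_intCast] at h0
      exact (ZMod.intCast_zmod_eq_zero_iff_dvd _ M).mp h0
    choose k hk using hdvd
    have hγeq : γ = (N : ℝ) • fun j => ((k j : ℤ) : ℝ) := by
      funext j
      have h2 : 2 * γ j = ((M : ℤ) * k j : ℤ) := by rw [hn j, hk j]
      have : (2:ℝ) * γ j = 2 * ((N:ℝ) * (k j : ℝ)) := by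
        rw [h2]; push_cast [hM]; ring
      simpa using mul_left_cancel₀ (two_ne_zero) this
    rw [AddSubgroup.mem_addSubgroupOf]
    refine ⟨hγ, ?_⟩
    obtain ⟨w, hw, hww⟩ := hkey (fun j => ((k j : ℤ) : ℝ)) (int_mem_bcc k)
    refine ⟨w, hw, ?_⟩
    show R.mulVecLin w = γ
    rw [hww, ← hγeq]
  have hfin : Finite (Fin 3 → ZMod M) := by infer_instance
  have hrange : Nat.card f.range ≠ 0 := Nat.card_pos.ne'
  have hdvd2 : ((csl bcc R).addSubgroupOf bcc).index ∣ f.ker.index :=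
    AddSubgroup.index_dvd_of_le hker
  rw [AddSubgroup.index_ker] at hdvd2
  rw [AddSubgroup.relIndex]
  exact fun h => hrange (by rw [h] at hdvd2; exact Nat.eq_zero_of_zero_dvd hdvd2)

lemma rat_of_coinc (R : Matrix (Fin 3) (Fin 3) ℝ) (hR : IsSO R)
    (hne : (csl bcc R).relIndex bcc ≠ 0) : ∀ i j, ∃ q : ℚ, R i j = (q : ℝ) := by
  intro i j
  set m : ℕ := (csl bcc R).relIndex bcc with hm
  have he : Pi.single i (1:ℝ) ∈ bcc := by
    have : Pi.single i (1:ℝ) = fun k => (((if k = i then 1 else 0 : ℤ)) : ℝ) := by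
      funext k
      rw [Pi.single_apply]
      split <;> simp_all
    rw [this]; exact int_mem_bcc _
  have hsm : m • Pi.single i (1:ℝ) ∈ csl bcc R := by
    have h1 := AddSubgroup.nsmul_index_mem ((csl bcc R).addSubgroupOf bcc)
      (⟨Pi.single i (1:ℝ), he⟩ : bcc)
    rw [AddSubgroup.mem_addSubgroupOf] at h1
    exact h1
  obtain ⟨-, v, hv, hRv⟩ := hsm
  have hveq : v = (m : ℝ) • (Rᵀ *ᵥ Pi.single i (1:ℝ)) := by
    have h2 : Rᵀ *ᵥ (R *ᵥ v) = v := by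
      rw [Matrix.mulVec_mulVec, hR.1, Matrix.one_mulVec]
    have hRv' : R *ᵥ v = m • Pi.single i (1:ℝ) := hRv
    rw [← h2, hRv', ← Nat.cast_smul_eq_nsmul ℝ, Matrix.mulVec_smul]
  have hvj : v j = (m : ℝ) * R i j := by
    rw [hveq]
    simp [Matrix.mulVec_single, Matrix.transpose_apply]
  obtain ⟨q, hq⟩ := bcc_le_rat3 hv j
  have hm0 : (m : ℝ) ≠ 0 := Nat.cast_ne_zero.mpr hne
  refine ⟨q / m, ?_⟩
  rw [Rat.cast_div]
  rw [← hq, hvj]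
  push_cast
  field_simp

theorem stmt1 (R : Matrix (Fin 3) (Fin 3) ℝ) (hR : IsSO R) :
    IsCoincRot bcc R ↔ ∀ i j, ∃ q : ℚ, R i j = (q : ℝ) := by
  constructor
  · intro h
    exact rat_of_coinc R hR h.2
  · intro h
    exact ⟨hR, relindex_ne_zero R hR h⟩
end
end

section
/- For two coincidence rotations R₁, R₂ of a lattice Γ, the index of Γ(R₁) ∩ Γ(R₂) in Γ equals Σ(R₁)·Σ(R₂)/Σ₊(R₁,R₂), where Σ₊(R₁,R₂) is the index of the sum Γ(R₁)+Γ(R₂) in Γ. -/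
open Matrix

noncomputable section

theorem stmt6 (n : ℕ) (b : Module.Basis (Fin n) ℝ (Fin n → ℝ))
    (Γ : AddSubgroup (Fin n → ℝ))
    (hΓ : Γ = (Submodule.span ℤ (Set.range fun i => b i)).toAddSubgroup)
    (R₁ R₂ : Matrix (Fin n) (Fin n) ℝ)
    (h₁ : IsCoincRot Γ R₁) (h₂ : IsCoincRot Γ R₂) :
    (csl Γ R₁ ⊓ csl Γ R₂).relIndex Γ * (csl Γ R₁ ⊔ csl Γ R₂).relIndex Γ =
      (csl Γ R₁).relIndex Γ * (csl Γ R₂).relIndex Γ := by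
  set H := csl Γ R₁ with hHdef
  set K := csl Γ R₂ with hKdef
  have hH : H ≤ Γ := inf_le_left
  have hK : K ≤ Γ := inf_le_left
  calc (H ⊓ K).relIndex Γ * (H ⊔ K).relIndex Γ
      = ((H ⊓ K).relIndex K * K.relIndex Γ) * (H ⊔ K).relIndex Γ := by
        rw [AddSubgroup.relIndex_mul_relIndex (H ⊓ K) K Γ inf_le_right hK]
    _ = (H.relIndex (H ⊔ K) * (H ⊔ K).relIndex Γ) * K.relIndex Γ := by
        rw [AddSubgroup.inf_relIndex_right, AddSubgroup.relIndex_sup_left]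
        ring
    _ = H.relIndex Γ * K.relIndex Γ := by
        rw [AddSubgroup.relIndex_mul_relIndex H (H ⊔ K) Γ le_sup_left (sup_le hH hK)]
end
end

section
/- For a primitive integral quaternion q with odd norm, the CSL of the body-centered cubic lattice associated with R(q) equals the projection of the left ideal qH: Γ ∩ R(q)Γ = P(qH). -/
open Matrix

noncomputable section

/- ## Auxiliary lemmas -/

def bccSet : AddSubgroup (Fin 3 → ℝ) where
  carrier := {x | ∃ e n1 n2 n3 : ℤ, (e = 0 ∨ e = 1) ∧
      x 0 = (2*n1 + e)/2 ∧ x 1 = (2*n2 + e)/2 ∧ x 2 = (2*n3 + e)/2}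
  zero_mem' := ⟨0, 0, 0, 0, Or.inl rfl, by norm_num⟩
  add_mem' := by
    rintro x y ⟨e, n1, n2, n3, he, h1, h2, h3⟩ ⟨f, m1, m2, m3, hf, g1, g2, g3⟩
    simp only [Set.mem_setOf_eq, Pi.add_apply, h1, h2, h3, g1, g2, g3]
    rcases he with rfl | rfl <;> rcases hf with rfl | rfl
    · exact ⟨0, n1+m1, n2+m2, n3+m3, Or.inl rfl, by push_cast; ring, by push_cast; ring,
        by push_cast; ring⟩
    · exact ⟨1, n1+m1, n2+m2, n3+m3, Or.inr rfl, by push_cast; ring, by push_cast; ring,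
        by push_cast; ring⟩
    · exact ⟨1, n1+m1, n2+m2, n3+m3, Or.inr rfl, by push_cast; ring, by push_cast; ring,
        by push_cast; ring⟩
    · exact ⟨0, n1+m1+1, n2+m2+1, n3+m3+1, Or.inl rfl, by push_cast; ring, by push_cast; ring,
        by push_cast; ring⟩
  neg_mem' := by
    rintro x ⟨e, n1, n2, n3, he, h1, h2, h3⟩
    refine ⟨e, -n1-e, -n2-e, -n3-e, he, ?_, ?_, ?_⟩ <;>
      simp only [Pi.neg_apply, h1, h2, h3] <;> push_cast <;> ring

lemma mem_bcc_iff (x : Fin 3 → ℝ) :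
    x ∈ bcc ↔ ∃ e n1 n2 n3 : ℤ, (e = 0 ∨ e = 1) ∧
      x 0 = (2*n1 + e)/2 ∧ x 1 = (2*n2 + e)/2 ∧ x 2 = (2*n3 + e)/2 := by
  constructor
  · intro hx
    have : bcc ≤ bccSet := by
      rw [bcc, AddSubgroup.closure_le]
      rintro v (rfl | rfl | rfl)
      · exact ⟨0, 1, 0, 0, Or.inl rfl, by norm_num [Matrix.cons_val_two, Matrix.tail_cons, Matrix.head_cons]⟩
      · exact ⟨0, 0, 1, 0, Or.inl rfl, by norm_num [Matrix.cons_val_two, Matrix.tail_cons, Matrix.head_cons]⟩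
      · exact ⟨1, 0, 0, 0, Or.inr rfl, by norm_num [Matrix.cons_val_two, Matrix.tail_cons, Matrix.head_cons]⟩
    exact this hx
  · rintro ⟨e, n1, n2, n3, he, h1, h2, h3⟩
    have hg1 : (![1,0,0] : Fin 3 → ℝ) ∈ bcc := AddSubgroup.subset_closure (by simp)
    have hg2 : (![0,1,0] : Fin 3 → ℝ) ∈ bcc := AddSubgroup.subset_closure (by simp)
    have hg3 : (![1/2,1/2,1/2] : Fin 3 → ℝ) ∈ bcc := AddSubgroup.subset_closure (by simp)
    have hx : x = (n1 - n3) • (![1,0,0] : Fin 3 → ℝ) + (n2 - n3) • (![0,1,0] : Fin 3 → ℝ)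
        + (2*n3 + e) • (![1/2,1/2,1/2] : Fin 3 → ℝ) := by
      funext i
      fin_cases i <;>
        simp [h1, h2, h3, Pi.smul_apply, zsmul_eq_mul] <;> push_cast <;> ring
    rw [hx]
    exact AddSubgroup.add_mem _ (AddSubgroup.add_mem _ (AddSubgroup.zsmul_mem _ hg1 _)
      (AddSubgroup.zsmul_mem _ hg2 _)) (AddSubgroup.zsmul_mem _ hg3 _)

lemma bezout4 {a b c d : ℤ} (hp : Primitive a b c d) :
    ∃ al be ga de : ℤ, a*al + b*be + c*ga + d*de = 1 := by
  have h1 := Int.gcd_eq_gcd_ab c d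
  have h2 := Int.gcd_eq_gcd_ab b ((Int.gcd c d : ℤ))
  have h3 := Int.gcd_eq_gcd_ab a ((Int.gcd b ((Int.gcd c d : ℤ)) : ℤ))
  unfold Primitive at hp
  rw [hp] at h3
  refine ⟨Int.gcdA a (Int.gcd b (Int.gcd c d : ℤ) : ℤ),
    Int.gcdA b (Int.gcd c d : ℤ) * Int.gcdB a (Int.gcd b (Int.gcd c d : ℤ) : ℤ),
    Int.gcdA c d * Int.gcdB b (Int.gcd c d : ℤ) * Int.gcdB a (Int.gcd b (Int.gcd c d : ℤ) : ℤ),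
    Int.gcdB c d * Int.gcdB b (Int.gcd c d : ℤ) * Int.gcdB a (Int.gcd b (Int.gcd c d : ℤ) : ℤ), ?_⟩
  linear_combination (-1 : ℤ) * h3 - Int.gcdB a ((Int.gcd b ((Int.gcd c d : ℤ)) : ℤ)) * h2
    - Int.gcdB b ((Int.gcd c d : ℤ)) * Int.gcdB a ((Int.gcd b ((Int.gcd c d : ℤ)) : ℤ)) * h1

lemma half_of_odd {N m w : ℤ} (hodd : Odd N) (h2 : 2*m = N*w) : ∃ t, m = N*t := by
  obtain ⟨k, hk⟩ := hodd
  have hco : IsCoprime (N:ℤ) 2 := ⟨1, -k, by linarith⟩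
  have hdvd : N ∣ m * 2 := ⟨w, by linarith⟩
  obtain ⟨t, ht⟩ := hco.dvd_of_dvd_mul_right hdvd
  exact ⟨t, ht⟩

lemma Rquat_apply0 (a b c d : ℤ) (y : Fin 3 → ℝ) :
    ((Rquat a b c d).mulVecLin y) 0 = ((qnorm a b c d : ℝ))⁻¹ *
      ((a^2+b^2-c^2-d^2 : ℝ) * y 0 + (-2*a*d+2*b*c) * y 1 + (2*a*c+2*b*d) * y 2) := by
  simp [Rquat, Matrix.mulVecLin_apply, Matrix.smul_mulVec, Matrix.mulVec,
    dotProduct, Fin.sum_univ_three]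
  ring

lemma Rquat_apply1 (a b c d : ℤ) (y : Fin 3 → ℝ) :
    ((Rquat a b c d).mulVecLin y) 1 = ((qnorm a b c d : ℝ))⁻¹ *
      ((2*a*d+2*b*c : ℝ) * y 0 + (a^2-b^2+c^2-d^2) * y 1 + (-2*a*b+2*c*d) * y 2) := by
  simp [Rquat, Matrix.mulVecLin_apply, Matrix.smul_mulVec, Matrix.mulVec,
    dotProduct, Fin.sum_univ_three]
  ring

lemma Rquat_apply2 (a b c d : ℤ) (y : Fin 3 → ℝ) :
    ((Rquat a b c d).mulVecLin y) 2 = ((qnorm a b c d : ℝ))⁻¹ *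
      ((-2*a*c+2*b*d : ℝ) * y 0 + (2*a*b+2*c*d) * y 1 + (a^2-b^2-c^2+d^2) * y 2) := by
  simp [Rquat, Matrix.mulVecLin_apply, Matrix.smul_mulVec, Matrix.mulVec,
    dotProduct, Fin.sum_univ_three]
  ring

set_option maxHeartbeats 3200000 in
theorem stmt11 (a b c d : ℤ) (hp : Primitive a b c d)
    (hodd : Odd (qnorm a b c d)) :
    ((csl bcc (Rquat a b c d) : AddSubgroup (Fin 3 → ℝ)) : Set (Fin 3 → ℝ)) =
      Pproj '' {x | ∃ h ∈ HurwitzSet, x = quat a b c d * h} := by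
  have hNexp : qnorm a b c d = a^2+b^2+c^2+d^2 := rfl
  rw [hNexp] at hodd
  have hoddN : Odd ((a^2+b^2+c^2+d^2 : ℤ)) := hodd
  obtain ⟨w2, hw2⟩ := hodd
  have hN0 : (a^2+b^2+c^2+d^2 : ℤ) ≠ 0 := by intro h; rw [h] at hw2; omega
  have hNr : ((qnorm a b c d : ℤ) : ℝ) ≠ 0 := by
    rw [hNexp]; exact_mod_cast hN0
  obtain ⟨al, be, ga, dl, hbez⟩ := bezout4 hp
  obtain ⟨ea2, hea⟩ := Int.even_mul_succ_self (a-1)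
  obtain ⟨eb2, heb⟩ := Int.even_mul_succ_self (b-1)
  obtain ⟨ec2, hec⟩ := Int.even_mul_succ_self (c-1)
  obtain ⟨ed2, hed⟩ := Int.even_mul_succ_self (d-1)
  obtain ⟨p, hsum⟩ : ∃ p : ℤ, a+b+c+d = 2*p+1 :=
    ⟨w2-ea2-eb2-ec2-ed2, by linear_combination hw2 - hea - heb - hec - hed⟩
  ext x
  simp only [SetLike.mem_coe, Set.mem_image, Set.mem_setOf_eq]
  constructor
  · -- CSL ⊆ P(qH)
    intro hx
    rw [csl, AddSubgroup.mem_inf] at hx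
    obtain ⟨hx1, hx2⟩ := hx
    rw [AddSubgroup.mem_map] at hx2
    obtain ⟨y, hy, hyx⟩ := hx2
    have hyx' : (Rquat a b c d).mulVecLin y = x := hyx
    rw [mem_bcc_iff] at hx1 hy
    obtain ⟨e, n1, n2, n3, he, hx0, hx1', hx2'⟩ := hx1
    obtain ⟨f, m1, m2, m3, hf, hy0, hy1, hy2⟩ := hy
    have hr0 := congrFun hyx' 0
    have hr1 := congrFun hyx' 1
    have hr2 := congrFun hyx' 2
    rw [Rquat_apply0, inv_mul_eq_iff_eq_mul₀ hNr, hNexp, hy0, hy1, hy2, hx0] at hr0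
    rw [Rquat_apply1, inv_mul_eq_iff_eq_mul₀ hNr, hNexp, hy0, hy1, hy2, hx1'] at hr1
    rw [Rquat_apply2, inv_mul_eq_iff_eq_mul₀ hNr, hNexp, hy0, hy1, hy2, hx2'] at hr2
    push_cast at hr0 hr1 hr2
    have F1 : (a^2+b^2-c^2-d^2)*(2*m1+f) + (-2*a*d+2*b*c)*(2*m2+f) + (2*a*c+2*b*d)*(2*m3+f) = (a^2+b^2+c^2+d^2)*(2*n1+e) := by
      have hc : (((a^2+b^2-c^2-d^2)*(2*m1+f) + (-2*a*d+2*b*c)*(2*m2+f) + (2*a*c+2*b*d)*(2*m3+f) : ℤ) : ℝ)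
          = (((a^2+b^2+c^2+d^2)*(2*n1+e) : ℤ) : ℝ) := by push_cast; linear_combination 2*hr0
      exact_mod_cast hc
    have F2 : (2*a*d+2*b*c)*(2*m1+f) + (a^2-b^2+c^2-d^2)*(2*m2+f) + (-2*a*b+2*c*d)*(2*m3+f) = (a^2+b^2+c^2+d^2)*(2*n2+e) := by
      have hc : (((2*a*d+2*b*c)*(2*m1+f) + (a^2-b^2+c^2-d^2)*(2*m2+f) + (-2*a*b+2*c*d)*(2*m3+f) : ℤ) : ℝ)
          = (((a^2+b^2+c^2+d^2)*(2*n2+e) : ℤ) : ℝ) := by push_cast; linear_combination 2*hr1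
      exact_mod_cast hc
    have F3 : (-2*a*c+2*b*d)*(2*m1+f) + (2*a*b+2*c*d)*(2*m2+f) + (a^2-b^2-c^2+d^2)*(2*m3+f) = (a^2+b^2+c^2+d^2)*(2*n3+e) := by
      have hc : (((-2*a*c+2*b*d)*(2*m1+f) + (2*a*b+2*c*d)*(2*m2+f) + (a^2-b^2-c^2+d^2)*(2*m3+f) : ℤ) : ℝ)
          = (((a^2+b^2+c^2+d^2)*(2*n3+e) : ℤ) : ℝ) := by push_cast; linear_combination 2*hr2
      exact_mod_cast hc
    have E1 : (a^2+b^2-c^2-d^2)*(2*n1+e) + (2*a*d+2*b*c)*(2*n2+e) + (-2*a*c+2*b*d)*(2*n3+e) = (a^2+b^2+c^2+d^2)*(2*m1+f) :=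
      mul_left_cancel₀ hN0 (by linear_combination (-((a^2+b^2-c^2-d^2) : ℤ))*F1 - (2*a*d+2*b*c)*F2 - (-2*a*c+2*b*d)*F3)
    have E2 : (-2*a*d+2*b*c)*(2*n1+e) + (a^2-b^2+c^2-d^2)*(2*n2+e) + (2*a*b+2*c*d)*(2*n3+e) = (a^2+b^2+c^2+d^2)*(2*m2+f) :=
      mul_left_cancel₀ hN0 (by linear_combination (-((-2*a*d+2*b*c) : ℤ))*F1 - (a^2-b^2+c^2-d^2)*F2 - (2*a*b+2*c*d)*F3)
    have E3 : (2*a*c+2*b*d)*(2*n1+e) + (-2*a*b+2*c*d)*(2*n2+e) + (a^2-b^2-c^2+d^2)*(2*n3+e) = (a^2+b^2+c^2+d^2)*(2*m3+f) :=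
      mul_left_cancel₀ hN0 (by linear_combination (-((2*a*c+2*b*d) : ℤ))*F1 - (-2*a*b+2*c*d)*F2 - (a^2-b^2-c^2+d^2)*F3)
    obtain ⟨t1, ht1⟩ := half_of_odd hoddN
      (show 2*(b*(a*e + b*(2*n1+e) + c*(2*n2+e) + d*(2*n3+e)) + a*(a*(2*n1+e) - b*e - c*(2*n3+e) + d*(2*n2+e))) = (a^2+b^2+c^2+d^2)*((2*n1+e)+(2*m1+f)) from by linear_combination E1)
    obtain ⟨t2, ht2⟩ := half_of_odd hoddN
      (show 2*(c*(a*e + b*(2*n1+e) + c*(2*n2+e) + d*(2*n3+e)) + a*(a*(2*n2+e) + b*(2*n3+e) - c*e - d*(2*n1+e))) = (a^2+b^2+c^2+d^2)*((2*n2+e)+(2*m2+f)) from by linear_combination E2)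
    obtain ⟨t3, ht3⟩ := half_of_odd hoddN
      (show 2*(d*(a*e + b*(2*n1+e) + c*(2*n2+e) + d*(2*n3+e)) + a*(a*(2*n3+e) - b*(2*n2+e) + c*(2*n1+e) - d*e)) = (a^2+b^2+c^2+d^2)*((2*n3+e)+(2*m3+f)) from by linear_combination E3)
    obtain ⟨t4, ht4⟩ := half_of_odd hoddN
      (show 2*(c*(a*(2*n3+e) - b*(2*n2+e) + c*(2*n1+e) - d*e) - d*(a*(2*n2+e) + b*(2*n3+e) - c*e - d*(2*n1+e))) = (a^2+b^2+c^2+d^2)*((2*n1+e)-(2*m1+f)) from by linear_combination -E1)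
    obtain ⟨t5, ht5⟩ := half_of_odd hoddN
      (show 2*(d*(a*(2*n1+e) - b*e - c*(2*n3+e) + d*(2*n2+e)) - b*(a*(2*n3+e) - b*(2*n2+e) + c*(2*n1+e) - d*e)) = (a^2+b^2+c^2+d^2)*((2*n2+e)-(2*m2+f)) from by linear_combination -E2)
    obtain ⟨t6, ht6⟩ := half_of_odd hoddN
      (show 2*(b*(a*(2*n2+e) + b*(2*n3+e) - c*e - d*(2*n1+e)) - c*(a*(2*n1+e) - b*e - c*(2*n3+e) + d*(2*n2+e))) = (a^2+b^2+c^2+d^2)*((2*n3+e)-(2*m3+f)) from by linear_combination -E3)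
    obtain ⟨S, hS⟩ : ∃ S : ℤ, S = al*(a*e + b*(2*n1+e) + c*(2*n2+e) + d*(2*n3+e)) - be*(a*(2*n1+e) - b*e - c*(2*n3+e) + d*(2*n2+e)) - ga*(a*(2*n2+e) + b*(2*n3+e) - c*e - d*(2*n1+e)) - dl*(a*(2*n3+e) - b*(2*n2+e) + c*(2*n1+e) - d*e) := ⟨_, rfl⟩
    obtain ⟨k0, hk0⟩ : ∃ k : ℤ, (a*e + b*(2*n1+e) + c*(2*n2+e) + d*(2*n3+e)) - (S + (a^2+b^2+c^2+d^2)*(S+e))*a = (a^2+b^2+c^2+d^2)*k :=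
      ⟨be*t1+ga*t2+dl*t3-(S+e)*a,
        by linear_combination (-a)*hS + be*ht1 + ga*ht2 + dl*ht3 - (a*e + b*(2*n1+e) + c*(2*n2+e) + d*(2*n3+e))*hbez⟩
    obtain ⟨k1, hk1⟩ : ∃ k : ℤ, (a*(2*n1+e) - b*e - c*(2*n3+e) + d*(2*n2+e)) + (S + (a^2+b^2+c^2+d^2)*(S+e))*b = (a^2+b^2+c^2+d^2)*k :=
      ⟨al*t1-ga*t6+dl*t5+(S+e)*b,
        by linear_combination b*hS + al*ht1 - ga*ht6 + dl*ht5 - (a*(2*n1+e) - b*e - c*(2*n3+e) + d*(2*n2+e))*hbez⟩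
    obtain ⟨k2, hk2⟩ : ∃ k : ℤ, (a*(2*n2+e) + b*(2*n3+e) - c*e - d*(2*n1+e)) + (S + (a^2+b^2+c^2+d^2)*(S+e))*c = (a^2+b^2+c^2+d^2)*k :=
      ⟨al*t2+be*t6-dl*t4+(S+e)*c,
        by linear_combination c*hS + al*ht2 + be*ht6 - dl*ht4 - (a*(2*n2+e) + b*(2*n3+e) - c*e - d*(2*n1+e))*hbez⟩
    obtain ⟨k3, hk3⟩ : ∃ k : ℤ, (a*(2*n3+e) - b*(2*n2+e) + c*(2*n1+e) - d*e) + (S + (a^2+b^2+c^2+d^2)*(S+e))*d = (a^2+b^2+c^2+d^2)*k :=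
      ⟨al*t3-be*t5+ga*t4+(S+e)*d,
        by linear_combination d*hS + al*ht3 - be*ht5 + ga*ht4 - (a*(2*n3+e) - b*(2*n2+e) + c*(2*n1+e) - d*e)*hbez⟩
    have hk0' := hk0
    have hk1' := hk1
    have hk2' := hk2
    have hk3' := hk3
    rw [hw2] at hk0' hk1' hk2' hk3'
    obtain ⟨q0, hq0⟩ : ∃ t : ℤ, k0 + e*a - e = 2*t :=
      ⟨e*p + b*n1 + c*n2 + d*n3 - S*a - w2*(S+e)*a - w2*k0,
        by linear_combination (-1 : ℤ)*hk0' + e*hsum⟩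
    obtain ⟨q1, hq1⟩ : ∃ t : ℤ, k1 - e*b - e = 2*t :=
      ⟨e*p - e*(b+c) + a*n1 + d*n2 - c*n3 + S*b + w2*(S+e)*b - w2*k1,
        by linear_combination (-1 : ℤ)*hk1' + e*hsum⟩
    obtain ⟨q2, hq2⟩ : ∃ t : ℤ, k2 - e*c - e = 2*t :=
      ⟨e*p - e*(c+d) + a*n2 + b*n3 - d*n1 + S*c + w2*(S+e)*c - w2*k2,
        by linear_combination (-1 : ℤ)*hk2' + e*hsum⟩
    obtain ⟨q3, hq3⟩ : ∃ t : ℤ, k3 - e*d - e = 2*t :=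
      ⟨e*p - e*(b+d) + a*n3 - b*n2 + c*n1 + S*d + w2*(S+e)*d - w2*k3,
        by linear_combination (-1 : ℤ)*hk3' + e*hsum⟩
    have Iid1 : a*(k1-e*b) + b*(k0+e*a) + c*(k3-e*d) - d*(k2-e*c) = (2*n1+e) :=
      mul_left_cancel₀ hN0 (by linear_combination (-a)*hk1 - b*hk0 - c*hk3 + d*hk2)
    have Iid2 : a*(k2-e*c) + c*(k0+e*a) + d*(k1-e*b) - b*(k3-e*d) = (2*n2+e) :=
      mul_left_cancel₀ hN0 (by linear_combination (-a)*hk2 - c*hk0 - d*hk1 + b*hk3)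
    have Iid3 : a*(k3-e*d) + d*(k0+e*a) + b*(k2-e*c) - c*(k1-e*b) = (2*n3+e) :=
      mul_left_cancel₀ hN0 (by linear_combination (-a)*hk3 - d*hk0 - b*hk2 + c*hk1)
    obtain ⟨Q, hQ0, hQ1, hQ2, hQ3⟩ : ∃ Q : Quaternion ℝ, Q.re = ((k0+e*a : ℤ) : ℝ)/2
        ∧ Q.imI = ((k1-e*b : ℤ) : ℝ)/2 ∧ Q.imJ = ((k2-e*c : ℤ) : ℝ)/2
        ∧ Q.imK = ((k3-e*d : ℤ) : ℝ)/2 :=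
      ⟨⟨((k0+e*a : ℤ) : ℝ)/2, ((k1-e*b : ℤ) : ℝ)/2, ((k2-e*c : ℤ) : ℝ)/2,
        ((k3-e*d : ℤ) : ℝ)/2⟩, rfl, rfl, rfl, rfl⟩
    refine ⟨quat a b c d * Q, ⟨Q, ?_, rfl⟩, ?_⟩
    · -- Hurwitz membership
      rcases he with rfl | rfl
      · left
        refine ⟨⟨q0, ?_⟩, ⟨q1, ?_⟩, ⟨q2, ?_⟩, ⟨q3, ?_⟩⟩
        · rw [hQ0]; push_cast [show k0 + 0*a = 2*q0 + 0 from by linarith]; ring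
        · rw [hQ1]; push_cast [show k1 - 0*b = 2*q1 + 0 from by linarith]; ring
        · rw [hQ2]; push_cast [show k2 - 0*c = 2*q2 + 0 from by linarith]; ring
        · rw [hQ3]; push_cast [show k3 - 0*d = 2*q3 + 0 from by linarith]; ring
      · right
        refine ⟨⟨q0, ?_⟩, ⟨q1, ?_⟩, ⟨q2, ?_⟩, ⟨q3, ?_⟩⟩
        · rw [hQ0]; push_cast [show k0 + 1*a = 2*q0 + 1 from by linarith]; ring
        · rw [hQ1]; push_cast [show k1 - 1*b = 2*q1 + 1 from by linarith]; ring
        · rw [hQ2]; push_cast [show k2 - 1*c = 2*q2 + 1 from by linarith]; ring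
        · rw [hQ3]; push_cast [show k3 - 1*d = 2*q3 + 1 from by linarith]; ring
    · -- projection equals x
      funext i
      have c1 := congrArg (fun t : ℤ => (t : ℝ)) Iid1
      have c2 := congrArg (fun t : ℤ => (t : ℝ)) Iid2
      have c3 := congrArg (fun t : ℤ => (t : ℝ)) Iid3
      push_cast at c1 c2 c3
      fin_cases i
      · show (quat a b c d * Q).imI = x 0
        rw [Quaternion.imI_mul, hx0]
        show (quat a b c d).re * Q.imI + (quat a b c d).imI * Q.re
          + (quat a b c d).imJ * Q.imK - (quat a b c d).imK * Q.imJ = _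
        rw [hQ0, hQ1, hQ2, hQ3]
        show (a : ℝ) * _ + (b : ℝ) * _ + (c : ℝ) * _ - (d : ℝ) * _ = _
        push_cast
        linear_combination c1/2
      · show (quat a b c d * Q).imJ = x 1
        rw [Quaternion.imJ_mul, hx1']
        show (quat a b c d).re * Q.imJ - (quat a b c d).imI * Q.imK
          + (quat a b c d).imJ * Q.re + (quat a b c d).imK * Q.imI = _
        rw [hQ0, hQ1, hQ2, hQ3]
        show (a : ℝ) * _ - (b : ℝ) * _ + (c : ℝ) * _ + (d : ℝ) * _ = _
        push_cast
        linear_combination c2/2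
      · show (quat a b c d * Q).imK = x 2
        rw [Quaternion.imK_mul, hx2']
        show (quat a b c d).re * Q.imK + (quat a b c d).imI * Q.imJ
          - (quat a b c d).imJ * Q.imI + (quat a b c d).imK * Q.re = _
        rw [hQ0, hQ1, hQ2, hQ3]
        show (a : ℝ) * _ + (b : ℝ) * _ - (c : ℝ) * _ + (d : ℝ) * _ = _
        push_cast
        linear_combination c3/2
  · -- P(qH) ⊆ CSL
    rintro ⟨xq, ⟨hw, hmem, rfl⟩, rfl⟩
    rw [csl, AddSubgroup.mem_inf]
    constructor
    · -- in bcc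
      rw [mem_bcc_iff]
      have pp0 : Pproj (quat a b c d * hw) 0 = (quat a b c d * hw).imI := rfl
      have pp1 : Pproj (quat a b c d * hw) 1 = (quat a b c d * hw).imJ := rfl
      have pp2 : Pproj (quat a b c d * hw) 2 = (quat a b c d * hw).imK := rfl
      rcases hmem with ⟨⟨h0, hh0⟩, ⟨h1, hh1⟩, ⟨h2, hh2⟩, ⟨h3, hh3⟩⟩ |
        ⟨⟨h0, hh0⟩, ⟨h1, hh1⟩, ⟨h2, hh2⟩, ⟨h3, hh3⟩⟩
      · refine ⟨0, a*h1+b*h0+c*h3-d*h2, a*h2-b*h3+c*h0+d*h1, a*h3+b*h2-c*h1+d*h0,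
          Or.inl rfl, ?_, ?_, ?_⟩
        · rw [pp0, Quaternion.imI_mul]
          show (a : ℝ) * hw.imI + (b : ℝ) * hw.re + (c : ℝ) * hw.imK - (d : ℝ) * hw.imJ = _
          rw [hh0, hh1, hh2, hh3]; push_cast; ring
        · rw [pp1, Quaternion.imJ_mul]
          show (a : ℝ) * hw.imJ - (b : ℝ) * hw.imK + (c : ℝ) * hw.re + (d : ℝ) * hw.imI = _
          rw [hh0, hh1, hh2, hh3]; push_cast; ring
        · rw [pp2, Quaternion.imK_mul]
          show (a : ℝ) * hw.imK + (b : ℝ) * hw.imJ - (c : ℝ) * hw.imI + (d : ℝ) * hw.re = _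
          rw [hh0, hh1, hh2, hh3]; push_cast; ring
      · have hh0' : hw.re = (h0 : ℝ) + 1/2 := by linarith
        have hh1' : hw.imI = (h1 : ℝ) + 1/2 := by linarith
        have hh2' : hw.imJ = (h2 : ℝ) + 1/2 := by linarith
        have hh3' : hw.imK = (h3 : ℝ) + 1/2 := by linarith
        have hsr := congrArg (fun t : ℤ => (t : ℝ)) hsum
        push_cast at hsr
        refine ⟨1, a*h1+b*h0+c*h3-d*h2+(p-d), a*h2-b*h3+c*h0+d*h1+(p-b),
          a*h3+b*h2-c*h1+d*h0+(p-c), Or.inr rfl, ?_, ?_, ?_⟩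
        · rw [pp0, Quaternion.imI_mul]
          show (a : ℝ) * hw.imI + (b : ℝ) * hw.re + (c : ℝ) * hw.imK - (d : ℝ) * hw.imJ = _
          rw [hh0', hh1', hh2', hh3']; push_cast; linear_combination hsr/2
        · rw [pp1, Quaternion.imJ_mul]
          show (a : ℝ) * hw.imJ - (b : ℝ) * hw.imK + (c : ℝ) * hw.re + (d : ℝ) * hw.imI = _
          rw [hh0', hh1', hh2', hh3']; push_cast; linear_combination hsr/2
        · rw [pp2, Quaternion.imK_mul]
          show (a : ℝ) * hw.imK + (b : ℝ) * hw.imJ - (c : ℝ) * hw.imI + (d : ℝ) * hw.re = _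
          rw [hh0', hh1', hh2', hh3']; push_cast; linear_combination hsr/2
    · -- in rotated lattice
      rw [AddSubgroup.mem_map]
      refine ⟨Pproj (hw * quat a b c d), ?_, ?_⟩
      · rw [mem_bcc_iff]
        have pp0 : Pproj (hw * quat a b c d) 0 = (hw * quat a b c d).imI := rfl
        have pp1 : Pproj (hw * quat a b c d) 1 = (hw * quat a b c d).imJ := rfl
        have pp2 : Pproj (hw * quat a b c d) 2 = (hw * quat a b c d).imK := rfl
        rcases hmem with ⟨⟨h0, hh0⟩, ⟨h1, hh1⟩, ⟨h2, hh2⟩, ⟨h3, hh3⟩⟩ |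
          ⟨⟨h0, hh0⟩, ⟨h1, hh1⟩, ⟨h2, hh2⟩, ⟨h3, hh3⟩⟩
        · refine ⟨0, b*h0+a*h1+d*h2-c*h3, c*h0-d*h1+a*h2+b*h3, d*h0+c*h1-b*h2+a*h3,
            Or.inl rfl, ?_, ?_, ?_⟩
          · rw [pp0, Quaternion.imI_mul]
            show hw.re * (b : ℝ) + hw.imI * (a : ℝ) + hw.imJ * (d : ℝ) - hw.imK * (c : ℝ) = _
            rw [hh0, hh1, hh2, hh3]; push_cast; ring
          · rw [pp1, Quaternion.imJ_mul]
            show hw.re * (c : ℝ) - hw.imI * (d : ℝ) + hw.imJ * (a : ℝ) + hw.imK * (b : ℝ) = _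
            rw [hh0, hh1, hh2, hh3]; push_cast; ring
          · rw [pp2, Quaternion.imK_mul]
            show hw.re * (d : ℝ) + hw.imI * (c : ℝ) - hw.imJ * (b : ℝ) + hw.imK * (a : ℝ) = _
            rw [hh0, hh1, hh2, hh3]; push_cast; ring
        · have hh0' : hw.re = (h0 : ℝ) + 1/2 := by linarith
          have hh1' : hw.imI = (h1 : ℝ) + 1/2 := by linarith
          have hh2' : hw.imJ = (h2 : ℝ) + 1/2 := by linarith
          have hh3' : hw.imK = (h3 : ℝ) + 1/2 := by linarith
          have hsr := congrArg (fun t : ℤ => (t : ℝ)) hsum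
          push_cast at hsr
          refine ⟨1, b*h0+a*h1+d*h2-c*h3+(p-c), c*h0-d*h1+a*h2+b*h3+(p-d),
            d*h0+c*h1-b*h2+a*h3+(p-b), Or.inr rfl, ?_, ?_, ?_⟩
          · rw [pp0, Quaternion.imI_mul]
            show hw.re * (b : ℝ) + hw.imI * (a : ℝ) + hw.imJ * (d : ℝ) - hw.imK * (c : ℝ) = _
            rw [hh0', hh1', hh2', hh3']; push_cast; linear_combination hsr/2
          · rw [pp1, Quaternion.imJ_mul]
            show hw.re * (c : ℝ) - hw.imI * (d : ℝ) + hw.imJ * (a : ℝ) + hw.imK * (b : ℝ) = _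
            rw [hh0', hh1', hh2', hh3']; push_cast; linear_combination hsr/2
          · rw [pp2, Quaternion.imK_mul]
            show hw.re * (d : ℝ) + hw.imI * (c : ℝ) - hw.imJ * (b : ℝ) + hw.imK * (a : ℝ) = _
            rw [hh0', hh1', hh2', hh3']; push_cast; linear_combination hsr/2
      · show (Rquat a b c d).mulVecLin (Pproj (hw * quat a b c d)) = Pproj (quat a b c d * hw)
        funext i
        fin_cases i
        · show (Rquat a b c d).mulVecLin (Pproj (hw * quat a b c d)) 0
            = Pproj (quat a b c d * hw) 0
          rw [Rquat_apply0 a b c d _, inv_mul_eq_iff_eq_mul₀ hNr, hNexp]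
          simp only [Pproj, Quaternion.imI_mul, Quaternion.imJ_mul, Quaternion.imK_mul]
          simp only [Pproj, quat, Quaternion.imI_mul, Quaternion.imJ_mul, Quaternion.imK_mul,
            Matrix.cons_val_zero, Matrix.cons_val_one, Matrix.head_cons, Matrix.cons_val_two,
            Matrix.tail_cons]
          push_cast
          ring
        · show (Rquat a b c d).mulVecLin (Pproj (hw * quat a b c d)) 1
            = Pproj (quat a b c d * hw) 1
          rw [Rquat_apply1 a b c d _, inv_mul_eq_iff_eq_mul₀ hNr, hNexp]
          simp only [Pproj, Quaternion.imI_mul, Quaternion.imJ_mul, Quaternion.imK_mul]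
          simp only [Pproj, quat, Quaternion.imI_mul, Quaternion.imJ_mul, Quaternion.imK_mul,
            Matrix.cons_val_zero, Matrix.cons_val_one, Matrix.head_cons, Matrix.cons_val_two,
            Matrix.tail_cons]
          push_cast
          ring
        · show (Rquat a b c d).mulVecLin (Pproj (hw * quat a b c d)) 2
            = Pproj (quat a b c d * hw) 2
          rw [Rquat_apply2 a b c d _, inv_mul_eq_iff_eq_mul₀ hNr, hNexp]
          simp only [Pproj, Quaternion.imI_mul, Quaternion.imJ_mul, Quaternion.imK_mul]
          simp only [Pproj, quat, Quaternion.imI_mul, Quaternion.imJ_mul, Quaternion.imK_mul,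
            Matrix.cons_val_zero, Matrix.cons_val_one, Matrix.head_cons, Matrix.cons_val_two,
            Matrix.tail_cons]
          push_cast
          ring
end
end
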